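/- Let p(x) = (1/√(2π))·e^{−x²/2} be the standard Gaussian density on ℝ. There exists an absolute constant C > 0 such that for every ε > 0 there exists a probability density q on ℝ satisfying: (1) ln q is C¹ and (ln q)′ is C-Lipschitz; (2) ∫ ((ln p)′(x) − (ln q)′(x))² p(x) dx < ε; (3) TV(p, q) > 1 − ε. In particular, the stationary distribution of Langevin dynamics run with the score estimate (ln q)′, which is q, can be arbitrarily far in total variation from p even though the score estimate is ε-accurate in L²(p). -/

import Mathlib

open MeasureTheory ProbabilityTheory Real
open scoped ENNReal NNReal

noncomputable section

/-- The measure on `ℝ` with Lebesgue density `p`. -/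
def densMeasureR (p : ℝ → ℝ) : Measure ℝ :=
  volume.withDensity fun x => ENNReal.ofReal (p x)

/-- `p` is a probability density on `ℝ`. -/
def IsDensityR (p : ℝ → ℝ) : Prop :=
  (∀ x, 0 ≤ p x) ∧ (∫ x, p x = 1)

/-- Total variation distance between measures on `ℝ`. -/
def TVdistR (μ ν : Measure ℝ) : ℝ :=
  ⨆ A : { A : Set ℝ // MeasurableSet A }, |(μ A.1).toReal - (ν A.1).toReal|

/-- The standard Gaussian density on `ℝ`. -/
def stdNormalDensity : ℝ → ℝ :=
  fun x => (Real.sqrt (2 * Real.pi))⁻¹ * Real.exp (-x ^ 2 / 2)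

/-! Tilt the Gaussian: `q ∝ exp (-x²/2 + h x)`, where the score perturbation `s = h'` vanishes
up to `R`, rises with slope `3` on `[R, 3R]` and stays at `6R` afterwards. Beyond `3R` the
exponent equals `6R² - (x - 6R)²/2`, so `q` has mass `≳ e^{6R²}` near `6R` against
`≲ e^{9R²/2}` below `3R`, while `p` gives `(3R, ∞)` mass at most `e^{-3R}`. The score error
`∫ s² p` only sees `p` on `(R, ∞)`, where `s x ^ 2 ≤ 9 x²`, so it is `O(e^{-R})`; and the
score `-x + s x` of `q` is `7`-Lipschitz whatever `R` is. -/

open Set Filter Topology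

section TotalVariation

variable {μ ν : Measure ℝ}

lemma abs_measureReal_sub_le_TVdistR [IsFiniteMeasure μ] [IsFiniteMeasure ν] {A : Set ℝ}
    (hA : MeasurableSet A) : |μ.real A - ν.real A| ≤ TVdistR μ ν := by
  refine le_ciSup (f := fun A : {A : Set ℝ // MeasurableSet A} => |μ.real A - ν.real A|)
    ⟨μ.real univ + ν.real univ, ?_⟩ ⟨A, hA⟩
  rintro _ ⟨⟨B, -⟩, rfl⟩
  have := measureReal_mono (μ := μ) (subset_univ B)
  have := measureReal_mono (μ := ν) (subset_univ B)
  have : 0 ≤ μ.real B := measureReal_nonneg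
  have : 0 ≤ ν.real B := measureReal_nonneg
  exact abs_sub_le_iff.mpr ⟨by linarith, by linarith⟩

lemma one_sub_lt_TVdistR [IsProbabilityMeasure μ] [IsProbabilityMeasure ν] {A : Set ℝ}
    {ε : ℝ} (hA : MeasurableSet A) (hμ : μ.real A < ε / 2) (hν : ν.real Aᶜ < ε / 2) :
    1 - ε < TVdistR μ ν := by
  rw [probReal_compl_eq_one_sub hA] at hν
  calc 1 - ε < ν.real A - μ.real A := by linarith
    _ ≤ |μ.real A - ν.real A| := by rw [abs_sub_comm]; exact le_abs_self _
    _ ≤ TVdistR μ ν := abs_measureReal_sub_le_TVdistR hA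

end TotalVariation

section Density

variable {p : ℝ → ℝ}

lemma IsDensityR.integrable (hp : IsDensityR p) : Integrable p :=
  Integrable.of_integral_ne_zero (by rw [hp.2]; exact one_ne_zero)

lemma IsDensityR.densMeasureR_real_apply (hp : IsDensityR p) {A : Set ℝ} (hA : MeasurableSet A) :
    (densMeasureR p).real A = ∫ x in A, p x := by
  rw [measureReal_def, densMeasureR, withDensity_apply _ hA,
    ← ofReal_integral_eq_lintegral_ofReal hp.integrable.integrableOn
      (Eventually.of_forall hp.1),
    ENNReal.toReal_ofReal (setIntegral_nonneg hA fun x _ => hp.1 x)]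

lemma IsDensityR.isProbabilityMeasure (hp : IsDensityR p) :
    IsProbabilityMeasure (densMeasureR p) := by
  refine ⟨?_⟩
  rw [densMeasureR, withDensity_apply _ MeasurableSet.univ, Measure.restrict_univ,
    ← ofReal_integral_eq_lintegral_ofReal hp.integrable (Eventually.of_forall hp.1), hp.2,
    ENNReal.ofReal_one]

end Density

section Gaussian

lemma hasDerivAt_neg_sq_div_two (x : ℝ) : HasDerivAt (fun y : ℝ => -y ^ 2 / 2) (-x) x := by
  have h := ((hasDerivAt_pow 2 x).neg).div_const 2
  simp only [Nat.cast_ofNat] at h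
  exact h.congr_deriv (by ring)

lemma integrable_exp_neg_sub_sq_div_two (c : ℝ) :
    Integrable fun x : ℝ => exp (-(x - c) ^ 2 / 2) := by
  convert (integrable_exp_neg_mul_sq (b := 1 / 2) (by norm_num)).comp_sub_right c using 3
  ring

lemma integral_exp_neg_sub_sq_div_two (c : ℝ) :
    ∫ x : ℝ, exp (-(x - c) ^ 2 / 2) = √(2 * π) := by
  calc ∫ x : ℝ, exp (-(x - c) ^ 2 / 2) = ∫ x : ℝ, exp (-(1 / 2) * x ^ 2) := by
        rw [integral_sub_right_eq_self (fun x : ℝ => exp (-x ^ 2 / 2)) c]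
        ring_nf
    _ = √(2 * π) := by rw [integral_gaussian]; ring_nf

lemma sqrt_two_mul_pi_le_three : √(2 * π) ≤ 3 :=
  (Real.sqrt_le_left (by norm_num)).mpr (by linarith [pi_lt_four])

lemma integrable_exp_neg_sq_div_two : Integrable fun x : ℝ => exp (-x ^ 2 / 2) := by
  simpa using integrable_exp_neg_sub_sq_div_two 0

lemma integral_exp_neg_sq_div_two : ∫ x : ℝ, exp (-x ^ 2 / 2) = √(2 * π) := by
  simpa using integral_exp_neg_sub_sq_div_two 0

lemma isDensityR_stdNormalDensity : IsDensityR stdNormalDensity := by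
  refine ⟨fun x => by unfold stdNormalDensity; positivity, ?_⟩
  simp only [stdNormalDensity, integral_const_mul, integral_exp_neg_sq_div_two]
  exact inv_mul_cancel₀ (by positivity)

lemma log_mul_exp {a : ℝ} (ha : 0 < a) (b : ℝ) : log (a * exp b) = log a + b := by
  rw [log_mul ha.ne' (exp_pos b).ne', log_exp]

lemma deriv_log_stdNormalDensity :
    deriv (fun x => log (stdNormalDensity x)) = fun x => -x := by
  have hlog : (fun x => log (stdNormalDensity x)) = fun x => log (√(2 * π))⁻¹ + -x ^ 2 / 2 :=
    funext fun x => log_mul_exp (by positivity) _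
  rw [hlog]
  exact funext fun x => ((hasDerivAt_neg_sq_div_two x).const_add _).deriv

lemma stdNormalDensity_le_exp_neg_sq_div_two (x : ℝ) :
    stdNormalDensity x ≤ exp (-x ^ 2 / 2) := by
  have : 1 ≤ √(2 * π) := Real.one_le_sqrt.mpr (by linarith [pi_gt_three])
  unfold stdNormalDensity
  exact mul_le_of_le_one_left (exp_pos _).le (inv_le_one_of_one_le₀ this)

lemma sq_mul_stdNormalDensity_le {x : ℝ} (hx : 4 ≤ x) :
    x ^ 2 * stdNormalDensity x ≤ 4 * exp (-x) := by
  have hsq : x ^ 2 ≤ 4 * exp x := by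
    have := add_one_le_exp (x / 2)
    have h2 : exp (x / 2) ^ 2 = exp x := by rw [← exp_nat_mul]; ring_nf
    nlinarith
  calc x ^ 2 * stdNormalDensity x ≤ 4 * exp x * exp (-x ^ 2 / 2) :=
        mul_le_mul hsq (stdNormalDensity_le_exp_neg_sq_div_two x)
          (isDensityR_stdNormalDensity.1 x) (by positivity)
    _ = 4 * exp (x - x ^ 2 / 2) := by rw [mul_assoc, ← exp_add]; ring_nf
    _ ≤ 4 * exp (-x) := by gcongr; nlinarith

lemma stdNormalDensity_le_exp_neg {x : ℝ} (hx : 4 ≤ x) : stdNormalDensity x ≤ exp (-x) := by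
  have h16 : 16 * stdNormalDensity x ≤ x ^ 2 * stdNormalDensity x :=
    mul_le_mul_of_nonneg_right (by nlinarith) (isDensityR_stdNormalDensity.1 x)
  linarith [sq_mul_stdNormalDensity_le hx, exp_pos (-x)]

lemma densMeasureR_stdNormalDensity_real_Ioi_le {a : ℝ} (ha : 4 ≤ a) :
    (densMeasureR stdNormalDensity).real (Ioi a) ≤ exp (-a) := by
  rw [isDensityR_stdNormalDensity.densMeasureR_real_apply measurableSet_Ioi,
    ← integral_exp_neg_Ioi]
  exact setIntegral_mono_on isDensityR_stdNormalDensity.integrable.integrableOn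
    (integrableOn_exp_neg_Ioi a) measurableSet_Ioi
    fun x hx => stdNormalDensity_le_exp_neg (ha.trans (le_of_lt hx))

end Gaussian

namespace GaussianTilt

def ramp (c x : ℝ) : ℝ := max (x - c) 0

lemma ramp_of_le {c x : ℝ} (h : x ≤ c) : ramp c x = 0 := max_eq_right (sub_nonpos.mpr h)

lemma ramp_of_ge {c x : ℝ} (h : c ≤ x) : ramp c x = x - c := max_eq_left (sub_nonneg.mpr h)

lemma continuous_ramp (c : ℝ) : Continuous (ramp c) := by unfold ramp; fun_prop

lemma lipschitzWith_ramp (c : ℝ) : LipschitzWith 1 (ramp c) := by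
  have h := (LipschitzWith.id.sub (LipschitzWith.const c)).max_const 0
  rw [add_zero] at h
  exact h

lemma hasDerivAt_ramp_sq_div_two (c x : ℝ) :
    HasDerivAt (fun y => ramp c y ^ 2 / 2) (ramp c x) x := by
  refine hasDerivAt_of_hasDerivAt_of_ne' (x := c) (fun y hy => ?_)
    ((continuous_ramp c).pow 2 |>.div_const 2).continuousAt (continuous_ramp c).continuousAt x
  rcases hy.lt_or_gt with hy | hy
  · have hzero : (fun y => ramp c y ^ 2 / 2) =ᶠ[𝓝 y] fun _ => 0 := by
      filter_upwards [Iio_mem_nhds hy] with z hz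
      simp [ramp_of_le hz.le]
    rw [ramp_of_le hy.le]
    exact (hasDerivAt_const y 0).congr_of_eventuallyEq hzero
  · have hsq : (fun y => ramp c y ^ 2 / 2) =ᶠ[𝓝 y] fun z => (z - c) ^ 2 / 2 := by
      filter_upwards [Ioi_mem_nhds hy] with z hz
      rw [ramp_of_ge hz.le]
    have h := (((hasDerivAt_id y).sub_const c).pow 2).div_const 2
    simp only [Nat.cast_ofNat, id] at h
    rw [ramp_of_ge hy.le]
    exact (h.congr_deriv (by ring)).congr_of_eventuallyEq hsq

def tiltScore (R x : ℝ) : ℝ := 3 * (ramp R x - ramp (3 * R) x)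

def tilt (R x : ℝ) : ℝ := 3 * (ramp R x ^ 2 / 2 - ramp (3 * R) x ^ 2 / 2)

def tiltedWeight (R x : ℝ) : ℝ := exp (-x ^ 2 / 2 + tilt R x)

def tiltedDensity (R x : ℝ) : ℝ := (∫ y, tiltedWeight R y)⁻¹ * tiltedWeight R x

variable {R x : ℝ}

lemma hasDerivAt_tilt (R x : ℝ) : HasDerivAt (tilt R) (tiltScore R x) x :=
  ((hasDerivAt_ramp_sq_div_two R x).sub (hasDerivAt_ramp_sq_div_two (3 * R) x)).const_mul 3

lemma contDiff_tilt (R : ℝ) : ContDiff ℝ 1 (tilt R) := by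
  rw [contDiff_one_iff_deriv]
  refine ⟨fun x => (hasDerivAt_tilt R x).differentiableAt, ?_⟩
  rw [funext fun x => (hasDerivAt_tilt R x).deriv]
  exact continuous_const.mul ((continuous_ramp R).sub (continuous_ramp (3 * R)))

lemma lipschitzWith_tiltScore (R : ℝ) : LipschitzWith 6 (tiltScore R) := by
  have h := (lipschitzWith_smul (3 : ℝ)).comp
    ((lipschitzWith_ramp R).sub (lipschitzWith_ramp (3 * R)))
  refine h.weaken (le_of_eq ?_)
  rw [← NNReal.coe_inj]
  norm_num

lemma tiltScore_of_le (hR : 0 ≤ R) (hx : x ≤ R) : tiltScore R x = 0 := by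
  rw [tiltScore, ramp_of_le hx, ramp_of_le (by linarith)]
  ring

lemma sq_tiltScore_le (hR : 0 ≤ R) (hx : R ≤ x) : tiltScore R x ^ 2 ≤ 9 * x ^ 2 := by
  have h3R : 0 ≤ ramp (3 * R) x := le_max_right _ _
  have hle : ramp (3 * R) x ≤ x - R := max_le (by linarith) (by linarith)
  rw [tiltScore, ramp_of_ge hx]
  nlinarith

lemma tilt_le (hR : 0 ≤ R) (hx : x ≤ 3 * R) : tilt R x ≤ 3 * R * max x 0 := by
  rw [tilt, ramp_of_le hx]
  rcases le_total x R with hxR | hRx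
  · rw [ramp_of_le hxR]
    have := le_max_right x 0
    nlinarith
  · rw [ramp_of_ge hRx, max_eq_left (by linarith)]
    nlinarith

lemma tilt_of_ge (hR : 0 ≤ R) (hx : 3 * R ≤ x) : tilt R x = 6 * R * x - 12 * R ^ 2 := by
  rw [tilt, ramp_of_ge hx, ramp_of_ge (by linarith)]
  ring

lemma tiltedWeight_pos (R x : ℝ) : 0 < tiltedWeight R x := exp_pos _

lemma continuous_tiltedWeight (R : ℝ) : Continuous (tiltedWeight R) := by
  unfold tiltedWeight
  have := (contDiff_tilt R).continuous
  fun_prop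

lemma tiltedWeight_le_of_le (hR : 0 ≤ R) (hx : x ≤ 3 * R) :
    tiltedWeight R x ≤ exp (-x ^ 2 / 2) + exp (9 * R ^ 2 / 2) * exp (-(x - 3 * R) ^ 2 / 2) := by
  have htilt := tilt_le hR hx
  rw [tiltedWeight, ← exp_add]
  rcases le_total x 0 with hx0 | hx0
  · rw [max_eq_right hx0, mul_zero] at htilt
    have := exp_le_exp.mpr (show -x ^ 2 / 2 + tilt R x ≤ -x ^ 2 / 2 by linarith)
    linarith [exp_pos (9 * R ^ 2 / 2 + -(x - 3 * R) ^ 2 / 2)]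
  · rw [max_eq_left hx0] at htilt
    have := exp_le_exp.mpr
      (show -x ^ 2 / 2 + tilt R x ≤ 9 * R ^ 2 / 2 + -(x - 3 * R) ^ 2 / 2 by nlinarith)
    linarith [exp_pos (-x ^ 2 / 2)]

lemma tiltedWeight_of_ge (hR : 0 ≤ R) (hx : 3 * R ≤ x) :
    tiltedWeight R x = exp (6 * R ^ 2) * exp (-(x - 6 * R) ^ 2 / 2) := by
  rw [tiltedWeight, tilt_of_ge hR hx, ← exp_add]
  ring_nf

lemma integrable_tiltedWeight (hR : 0 ≤ R) : Integrable (tiltedWeight R) := by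
  have hg := integrable_exp_neg_sub_sq_div_two
  refine ((integrable_exp_neg_sq_div_two.add ((hg (3 * R)).const_mul (exp (9 * R ^ 2 / 2)))).add
    ((hg (6 * R)).const_mul (exp (6 * R ^ 2)))).mono'
    (continuous_tiltedWeight R).aestronglyMeasurable (Eventually.of_forall fun x => ?_)
  rw [Real.norm_of_nonneg (tiltedWeight_pos R x).le, Pi.add_apply, Pi.add_apply]
  rcases le_total x (3 * R) with hx | hx
  · have := tiltedWeight_le_of_le hR hx
    have : 0 < exp (6 * R ^ 2) * exp (-(x - 6 * R) ^ 2 / 2) := by positivity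
    linarith
  · rw [tiltedWeight_of_ge hR hx]
    have : 0 < exp (-x ^ 2 / 2) + exp (9 * R ^ 2 / 2) * exp (-(x - 3 * R) ^ 2 / 2) := by positivity
    linarith

lemma setIntegral_Iic_tiltedWeight_le (hR : 0 ≤ R) :
    ∫ x in Iic (3 * R), tiltedWeight R x ≤ √(2 * π) * (1 + exp (9 * R ^ 2 / 2)) := by
  have hg := integrable_exp_neg_sub_sq_div_two
  have henv := integrable_exp_neg_sq_div_two.add ((hg (3 * R)).const_mul (exp (9 * R ^ 2 / 2)))
  calc ∫ x in Iic (3 * R), tiltedWeight R x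
      ≤ ∫ x in Iic (3 * R), (exp (-x ^ 2 / 2) +
          exp (9 * R ^ 2 / 2) * exp (-(x - 3 * R) ^ 2 / 2)) :=
        setIntegral_mono_on (integrable_tiltedWeight hR).integrableOn henv.integrableOn
          measurableSet_Iic fun x hx => tiltedWeight_le_of_le hR hx
    _ ≤ ∫ x, (exp (-x ^ 2 / 2) + exp (9 * R ^ 2 / 2) * exp (-(x - 3 * R) ^ 2 / 2)) :=
        setIntegral_le_integral henv (Eventually.of_forall fun x => by positivity)
    _ = √(2 * π) * (1 + exp (9 * R ^ 2 / 2)) := by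
        rw [integral_add integrable_exp_neg_sq_div_two ((hg _).const_mul _), integral_const_mul,
          integral_exp_neg_sq_div_two, integral_exp_neg_sub_sq_div_two]
        ring

lemma exp_le_integral_tiltedWeight (hR : 0 ≤ R) :
    exp (6 * R ^ 2 - 1 / 2) ≤ ∫ x, tiltedWeight R x := by
  have hbound : ∀ x ∈ Icc (6 * R) (6 * R + 1),
      exp (6 * R ^ 2 - 1 / 2) ≤ tiltedWeight R x := by
    rintro x ⟨hx₁, hx₂⟩
    rw [tiltedWeight_of_ge hR (by linarith), ← exp_add]
    exact exp_le_exp.mpr (by nlinarith)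
  have hIcc := setIntegral_ge_of_const_le measurableSet_Icc measure_Icc_lt_top.ne hbound
    (integrable_tiltedWeight hR).integrableOn
  rw [Real.volume_real_Icc_of_le (by linarith), add_sub_cancel_left, one_smul] at hIcc
  exact hIcc.trans (setIntegral_le_integral (integrable_tiltedWeight hR)
    (Eventually.of_forall fun x => (tiltedWeight_pos R x).le))

lemma integral_tiltedWeight_pos (hR : 0 ≤ R) : 0 < ∫ x, tiltedWeight R x :=
  (exp_pos _).trans_le (exp_le_integral_tiltedWeight hR)

lemma tiltedDensity_pos (hR : 0 ≤ R) (x : ℝ) : 0 < tiltedDensity R x :=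
  mul_pos (inv_pos.mpr (integral_tiltedWeight_pos hR)) (tiltedWeight_pos R x)

lemma isDensityR_tiltedDensity (hR : 0 ≤ R) : IsDensityR (tiltedDensity R) := by
  refine ⟨fun x => (tiltedDensity_pos hR x).le, ?_⟩
  simp only [tiltedDensity]
  rw [integral_const_mul, inv_mul_cancel₀ (integral_tiltedWeight_pos hR).ne']

lemma log_tiltedDensity (hR : 0 ≤ R) :
    (fun x => log (tiltedDensity R x)) =
      fun x => log (∫ y, tiltedWeight R y)⁻¹ + (-x ^ 2 / 2 + tilt R x) :=
  funext fun _ => log_mul_exp (inv_pos.mpr (integral_tiltedWeight_pos hR)) _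

lemma contDiff_log_tiltedDensity (hR : 0 ≤ R) :
    ContDiff ℝ 1 fun x => log (tiltedDensity R x) := by
  rw [log_tiltedDensity hR]
  have := contDiff_tilt R
  fun_prop

lemma deriv_log_tiltedDensity (hR : 0 ≤ R) :
    deriv (fun x => log (tiltedDensity R x)) = fun x => -x + tiltScore R x := by
  rw [log_tiltedDensity hR]
  exact funext fun x =>
    (((hasDerivAt_neg_sq_div_two x).add (hasDerivAt_tilt R x)).const_add _).deriv

lemma lipschitzWith_deriv_log_tiltedDensity (hR : 0 ≤ R) :
    LipschitzWith 7 (deriv fun x => log (tiltedDensity R x)) := by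
  rw [deriv_log_tiltedDensity hR]
  exact (LipschitzWith.id.neg.add (lipschitzWith_tiltScore R)).weaken (by norm_num)

lemma integral_sq_tiltScore_mul_stdNormalDensity_le (hR : 4 ≤ R) :
    ∫ x, tiltScore R x ^ 2 * stdNormalDensity x ≤ 36 * exp (-R) := by
  have hR0 : 0 ≤ R := by linarith
  have hp := isDensityR_stdNormalDensity.1
  rw [← setIntegral_eq_integral_of_forall_compl_eq_zero (s := Ioi R) fun x hx => by
    rw [tiltScore_of_le hR0 (not_lt.mp hx)]; ring]
  calc ∫ x in Ioi R, tiltScore R x ^ 2 * stdNormalDensity x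
      ≤ ∫ x in Ioi R, 36 * exp (-x) := by
        refine integral_mono_of_nonneg (ae_of_all _ fun x => mul_nonneg (sq_nonneg _) (hp x))
          ((integrableOn_exp_neg_Ioi R).const_mul 36)
          (ae_restrict_of_forall_mem measurableSet_Ioi fun x hx => ?_)
        calc tiltScore R x ^ 2 * stdNormalDensity x ≤ 9 * x ^ 2 * stdNormalDensity x :=
              mul_le_mul_of_nonneg_right (sq_tiltScore_le hR0 (le_of_lt hx)) (hp x)
          _ ≤ 36 * exp (-x) := by
              linarith [sq_mul_stdNormalDensity_le (hR.trans (le_of_lt hx))]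
    _ = 36 * exp (-R) := by rw [integral_const_mul, integral_exp_neg_Ioi]

lemma densMeasureR_tiltedDensity_real_Iic_le (hR : 4 ≤ R) :
    (densMeasureR (tiltedDensity R)).real (Iic (3 * R)) ≤ 6 * exp (-R) := by
  have hR0 : 0 ≤ R := by linarith
  rw [(isDensityR_tiltedDensity hR0).densMeasureR_real_apply measurableSet_Iic]
  simp only [tiltedDensity]
  rw [integral_const_mul]
  calc (∫ x, tiltedWeight R x)⁻¹ * ∫ x in Iic (3 * R), tiltedWeight R x
      ≤ (exp (6 * R ^ 2 - 1 / 2))⁻¹ * (3 * (2 * exp (9 * R ^ 2 / 2))) := by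
        refine mul_le_mul (inv_anti₀ (exp_pos _) (exp_le_integral_tiltedWeight hR0))
          ((setIntegral_Iic_tiltedWeight_le hR0).trans ?_)
          (setIntegral_nonneg measurableSet_Iic fun x _ => (tiltedWeight_pos R x).le)
          (by positivity)
        gcongr
        · exact sqrt_two_mul_pi_le_three
        · linarith [one_le_exp (by positivity : 0 ≤ 9 * R ^ 2 / 2)]
    _ = 6 * (exp (-(6 * R ^ 2 - 1 / 2)) * exp (9 * R ^ 2 / 2)) := by rw [exp_neg]; ring
    _ = 6 * exp (1 / 2 - 3 / 2 * R ^ 2) := by rw [← exp_add]; ring_nf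
    _ ≤ 6 * exp (-R) := by gcongr; nlinarith

end GaussianTilt

open GaussianTilt in
/-- The stationary distribution of Langevin dynamics with an `L²(p)`-accurate score
estimate can be arbitrarily far from `p` in total variation. -/
theorem lmc_stationary_far :
    ∃ C : ℝ, 0 < C ∧
      ∀ ε : ℝ, 0 < ε →
        ∃ q : ℝ → ℝ, IsDensityR q ∧ (∀ x, 0 < q x) ∧
          ContDiff ℝ 1 (fun x => Real.log (q x)) ∧
          LipschitzWith (Real.toNNReal C) (deriv fun x => Real.log (q x)) ∧
          (∫ x, (deriv (fun y => Real.log (stdNormalDensity y)) x -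
                deriv (fun y => Real.log (q y)) x) ^ 2 * stdNormalDensity x) < ε ∧
          1 - ε < TVdistR (densMeasureR stdNormalDensity) (densMeasureR q) := by
  refine ⟨7, by norm_num, fun ε hε => ?_⟩
  obtain ⟨R, hRε, hR⟩ : ∃ R, 36 * exp (-R) < ε ∧ 4 ≤ R :=
    (((tendsto_exp_neg_atTop_nhds_zero.const_mul 36).eventually_lt_const (by simpa using hε)).and
      (eventually_ge_atTop 4)).exists
  have hR0 : 0 ≤ R := by linarith
  have hq := isDensityR_tiltedDensity hR0
  refine ⟨tiltedDensity R, hq, tiltedDensity_pos hR0, contDiff_log_tiltedDensity hR0,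
    by simpa using lipschitzWith_deriv_log_tiltedDensity hR0, ?_, ?_⟩
  · simp only [deriv_log_stdNormalDensity, deriv_log_tiltedDensity hR0, sub_add_cancel_left,
      neg_sq]
    linarith [integral_sq_tiltScore_mul_stdNormalDensity_le hR]
  · have := isDensityR_stdNormalDensity.isProbabilityMeasure
    have := hq.isProbabilityMeasure
    refine one_sub_lt_TVdistR (measurableSet_Ioi (a := 3 * R)) ?_ ?_
    · linarith [densMeasureR_stdNormalDensity_real_Ioi_le (a := 3 * R) (by linarith),
        exp_le_exp.mpr (show -(3 * R) ≤ -R by linarith)]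
    · rw [compl_Ioi]
      linarith [densMeasureR_tiltedDensity_real_Iic_le hR]
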